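/- arXiv:2509.03371 — 5 statements merged into one kernel-verified Lean document; each statement's English description precedes it below -/
import Mathlib

section
/- In a locally cartesian closed category C, for arrows f : x → y and g : e → x, the dependent product Π_f g is the pullback in the slice category C/y of the exponential transpose map id_y → [f,f] along the map [f, f∘g] → [f,f] induced by post-composition with g, where [-,-] denotes the internal hom (exponential) in C/y. -/
/-!
Both objects represent the same functor on `C/y`, namely
`A ↦ {h : f × A ⟶ g ≫ f | g ∘ h = fst}`. A map `A ⟶ Π_f g` is a map `f^* A ⟶ g` over `x`, and
`f^* A`, read over `y`, is the product `f × A`. A map from `A` into the pullback is a map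
`k : A ⟶ [f, g ≫ f]` whose composite with `[f, g]` is the name of the first projection, and
uncurrying `k` turns this condition into `g ∘ h = fst`.
-/

open CategoryTheory Limits MonoidalCategory CartesianClosed CartesianMonoidalCategory MonoidalClosed

universe v u

section InternalSections

variable {D : Type*} [Category D] [CartesianMonoidalCategory D] [MonoidalClosed D]

lemma toUnit_comp_curry_fst (X A : D) :
    toUnit A ≫ curry (fst X (𝟙_ D)) = curry (fst X A) := by
  rw [← curry_natural_left, whiskerLeft_fst]

variable [HasPullbacks D] {X Y : D}

noncomputable abbrev ihomSections (q : Y ⟶ X) : D :=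
  pullback (curry (fst X (𝟙_ D))) ((ihom X).map q)

noncomputable def homIhomSectionsEquiv (q : Y ⟶ X) (A : D) :
    (A ⟶ ihomSections q) ≃ {h : X ⊗ A ⟶ Y // h ≫ q = fst X A} where
  toFun r := ⟨uncurry (r ≫ pullback.snd _ _), by
    rw [← uncurry_natural_right, Category.assoc, ← pullback.condition, ← Category.assoc,
      toUnit_unique (r ≫ pullback.fst _ _) (toUnit A), toUnit_comp_curry_fst, uncurry_curry]⟩
  invFun h := pullback.lift (toUnit A) (curry h.1) (by
    rw [toUnit_comp_curry_fst, ← curry_natural_right, h.2])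
  left_inv r := by
    apply pullback.hom_ext
    · exact toUnit_unique _ _
    · rw [pullback.lift_snd, curry_uncurry]
  right_inv h := Subtype.ext (by dsimp only; rw [pullback.lift_snd, uncurry_curry])

lemma homIhomSectionsEquiv_comp (q : Y ⟶ X) {A A' : D} (a : A' ⟶ A) (r : A ⟶ ihomSections q) :
    (homIhomSectionsEquiv q A' (a ≫ r)).1 = (X ◁ a) ≫ (homIhomSectionsEquiv q A r).1 := by
  simp only [homIhomSectionsEquiv, Equiv.coe_fn_mk, uncurry_natural_left, whiskerLeft_comp,
    Category.assoc]

end InternalSections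

section Slices

variable {C : Type u} [Category.{v} C] [HasPullbacks C] {x y : C} (f : x ⟶ y)

@[simp]
lemma Over.pullback_map_left_fst {A A' : Over y} (a : A' ⟶ A) :
    ((Over.pullback f).map a).left ≫ pullback.fst A.hom f = pullback.fst A'.hom f ≫ a.left :=
  pullback.lift_fst _ _ _

@[simp]
lemma Over.pullback_map_left_snd {A A' : Over y} (a : A' ⟶ A) :
    ((Over.pullback f).map a).left ≫ pullback.snd A.hom f = pullback.snd A'.hom f :=
  pullback.lift_snd _ _ _

variable [CartesianMonoidalCategory (Over y)]

noncomputable def Over.mkTensorLeftIsoPullback (A : Over y) :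
    (Over.mk f ⊗ A).left ≅ pullback A.hom f :=
  (Over.isPullback_of_binaryFan_isLimit _ (tensorProductIsBinaryProduct _ _)).flip.isoPullback

@[simp]
lemma Over.mkTensorLeftIsoPullback_hom_fst (A : Over y) :
    (Over.mkTensorLeftIsoPullback f A).hom ≫ pullback.fst A.hom f = (snd (Over.mk f) A).left :=
  IsPullback.isoPullback_hom_fst _

@[simp]
lemma Over.mkTensorLeftIsoPullback_hom_snd (A : Over y) :
    (Over.mkTensorLeftIsoPullback f A).hom ≫ pullback.snd A.hom f = (fst (Over.mk f) A).left :=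
  IsPullback.isoPullback_hom_snd _

lemma Over.mkTensorLeftIsoPullback_hom_naturality {A A' : Over y} (a : A' ⟶ A) :
    (Over.mkTensorLeftIsoPullback f A').hom ≫ ((Over.pullback f).map a).left =
      (Over.mk f ◁ a).left ≫ (Over.mkTensorLeftIsoPullback f A).hom := by
  apply pullback.hom_ext
  · simp [← Over.comp_left, -Over.pullback_map_left,
      reassoc_of% Over.mkTensorLeftIsoPullback_hom_fst]
  · simp [← Over.comp_left, -Over.pullback_map_left]

noncomputable def Over.pullbackHomEquiv (A : Over y) {e : C} (g : e ⟶ x) :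
    ((Over.pullback f).obj A ⟶ Over.mk g) ≃
      {h : Over.mk f ⊗ A ⟶ Over.mk (g ≫ f) //
        h ≫ (Over.homMk g : Over.mk (g ≫ f) ⟶ Over.mk f) = fst _ _} where
  toFun u :=
    have hu : (Over.mkTensorLeftIsoPullback f A).hom ≫ u.left ≫ g = (fst (Over.mk f) A).left := by
      simpa using (Over.mkTensorLeftIsoPullback f A).hom ≫= Over.w u
    ⟨Over.homMk ((Over.mkTensorLeftIsoPullback f A).hom ≫ u.left) (by
      simpa [reassoc_of% hu] using Over.w (fst (Over.mk f) A)),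
      by ext; simpa using hu⟩
  invFun h := Over.homMk ((Over.mkTensorLeftIsoPullback f A).inv ≫ h.1.left) (by
      have hh : h.1.left ≫ g = (fst (Over.mk f) A).left := by
        simpa using congrArg CommaMorphism.left h.2
      simp [hh, Iso.inv_comp_eq])
  left_inv u := by ext; simp
  right_inv h := by ext; simp

lemma Over.pullbackHomEquiv_comp {A A' : Over y} (a : A' ⟶ A) {e : C} {g : e ⟶ x}
    (u : (Over.pullback f).obj A ⟶ Over.mk g) :
    (Over.pullbackHomEquiv f A' g ((Over.pullback f).map a ≫ u)).1 =
      (Over.mk f ◁ a) ≫ (Over.pullbackHomEquiv f A g u).1 := by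
  ext
  simp [Over.pullbackHomEquiv, -Over.pullback_map_left,
    reassoc_of% Over.mkTensorLeftIsoPullback_hom_naturality]

end Slices

/-- In a locally cartesian closed category `C` (every slice cartesian
closed, pullback functors with right adjoints `Π_f`), for `f : x ⟶ y` and `g : e ⟶ x`,
the dependent product `Π_f g` is the pullback, in the slice `C/y`, of the map
`[f, f ∘ g] ⟶ [f, f]` (post-composition with `g`) along the exponential transpose
`id_y ⟶ [f, f]` of the identity on `f`. -/
theorem dependent_product_as_pullback_of_exponentials
    {C : Type u} [Category.{v} C] [HasFiniteLimits C]
    [∀ z : C, CartesianMonoidalCategory (Over z)] [∀ z : C, MonoidalClosed (Over z)]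
    {x y e : C} (f : x ⟶ y) (g : e ⟶ x)
    (Pf : Over x ⥤ Over y) (adj : Over.pullback f ⊣ Pf) :
    Nonempty (Pf.obj (Over.mk g) ≅
      pullback
        (MonoidalClosed.curry (CartesianMonoidalCategory.fst (Over.mk f) (𝟙_ (Over y))) :
          𝟙_ (Over y) ⟶ (Over.mk f) ⟹ (Over.mk f))
        ((ihom (Over.mk f)).map
          (Over.homMk g : Over.mk (g ≫ f) ⟶ Over.mk f))) := by
  let homEquiv (A : Over y) : (A ⟶ Pf.obj (Over.mk g)) ≃ (A ⟶ ihomSections _) :=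
    ((adj.homEquiv A (Over.mk g)).symm.trans (Over.pullbackHomEquiv f A g)).trans
      (homIhomSectionsEquiv _ A).symm
  refine ⟨Yoneda.ext _ _ (fun t => homEquiv _ t) (fun r => (homEquiv _).symm r)
    (fun t => (homEquiv _).symm_apply_apply t) (fun r => (homEquiv _).apply_symm_apply r)
    fun {A A'} a t => (homIhomSectionsEquiv _ A').injective (Subtype.ext ?_)⟩
  simp [homEquiv, homIhomSectionsEquiv_comp, Adjunction.homEquiv_naturality_left_symm,
    Over.pullbackHomEquiv_comp]
end

section
/- In a tribe, if u : X → Y is an anodyne map, then u is a strong deformation retract: there exists r : Y → X with r ∘ u = id_X and a homotopy H : Y → PY (valued in a path object for Y) from u ∘ r to id_Y which is constant on X, i.e. H ∘ u = ι_Y ∘ u where ι_Y : Y → PY is the reflexivity map. -/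
/-!
Every object of a tribe is fibrant, so lifting `𝟙 X` against `X ⟶ 1` along the anodyne `u`
gives a retraction `r`. The square with top `u ≫ ι` and bottom `(r ≫ u, 𝟙 Y)` against the
fibration `π : PY ⟶ Y × Y` commutes because `r` retracts `u`, and its lift is the homotopy.
-/

set_option autoImplicit false

open CategoryTheory Limits

universe v u

namespace TribePaper

variable {C : Type u} [Category.{v} C]

/-- Anodyne maps relative to a class of fibrations: the maps with the left lifting
property against all fibrations. -/
def Anodyne (fib : MorphismProperty C) : MorphismProperty C :=
  fun _ _ i => ∀ {a b : C} (p : a ⟶ b), fib p → HasLiftingProperty i p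

/-- A tribe structure (Joyal): a class of fibrations, stable under composition,
containing the isomorphisms, with a terminal object to which every map is a fibration,
pullbacks along fibrations (with fibrations stable under base change), factorizations
as anodyne followed by fibration, and anodyne maps stable under base change along
fibrations. -/
structure TribeStruct (C : Type u) [Category.{v} C] where
  fib : MorphismProperty C
  fib_comp : ∀ {x y z : C} (f : x ⟶ y) (g : y ⟶ z), fib f → fib g → fib (f ≫ g)
  fib_iso : ∀ {x y : C} (f : x ⟶ y), IsIso f → fib f
  term : C
  isTerm : IsTerminal term
  fib_term : ∀ x : C, fib (isTerm.from x)
  pb_exists : ∀ {x y z : C} (f : x ⟶ z) (g : y ⟶ z), fib g →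
    ∃ (w : C) (p₁ : w ⟶ x) (p₂ : w ⟶ y) (h : IsPullback p₁ p₂ f g), fib p₁
  fib_base_change : ∀ {w x y z : C} (p₁ : w ⟶ x) (p₂ : w ⟶ y) (f : x ⟶ z) (g : y ⟶ z),
    IsPullback p₁ p₂ f g → fib g → fib p₁
  fact : ∀ {x y : C} (f : x ⟶ y),
    ∃ (z : C) (i : x ⟶ z) (p : z ⟶ y), Anodyne fib i ∧ fib p ∧ i ≫ p = f
  anodyne_base_change : ∀ {w x y z : C} (p₁ : w ⟶ x) (p₂ : w ⟶ y) (f : x ⟶ z) (g : y ⟶ z),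
    IsPullback p₁ p₂ f g → fib g → Anodyne fib f → Anodyne fib p₂


section LiftingAgainstPathObject

variable {t : C} (ht : IsTerminal t)

lemma exists_retraction_of_hasLiftingProperty {X Y : C} (u : X ⟶ Y)
    [HasLiftingProperty u (ht.from X)] : ∃ r : Y ⟶ X, u ≫ r = 𝟙 X :=
  have sq : CommSq (𝟙 X) u (ht.from X) (ht.from Y) := ⟨ht.hom_ext _ _⟩
  ⟨sq.lift, sq.fac_left⟩

lemma exists_homotopy_rel_of_hasLiftingProperty {X Y : C} (u : X ⟶ Y) (r : Y ⟶ X)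
    (hr : u ≫ r = 𝟙 X) {prodY : C} {pr₁ pr₂ : prodY ⟶ Y}
    (hprod : IsPullback pr₁ pr₂ (ht.from Y) (ht.from Y))
    {PY : C} (ι : Y ⟶ PY) (π : PY ⟶ prodY) [HasLiftingProperty u π]
    (hfact : ι ≫ π = hprod.lift (𝟙 Y) (𝟙 Y) (by simp)) :
    ∃ H : Y ⟶ PY, H ≫ π = hprod.lift (r ≫ u) (𝟙 Y) (by simp) ∧ u ≫ H = u ≫ ι := by
  have sq : CommSq (u ≫ ι) u π (hprod.lift (r ≫ u) (𝟙 Y) (by simp)) := by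
    constructor
    apply hprod.hom_ext <;> simp [hfact, reassoc_of% hr]
  exact ⟨sq.lift, sq.fac_right, sq.fac_left⟩

end LiftingAgainstPathObject

/-- In a tribe, every anodyne map `u : X ⟶ Y` is a strong deformation
retract: given a binary product `Y × Y` (a pullback over the terminal object) and a path
object `Y → PY → Y × Y` (reflexivity `ι` anodyne, projection `π` a fibration, factoring
the diagonal), there are `r : Y ⟶ X` with `u ≫ r = 𝟙 X` and a homotopy `H : Y ⟶ PY`
from `u ∘ r` to `𝟙 Y` which is constant on `X`, i.e. `u ≫ H = u ≫ ι`. -/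
theorem anodyne_is_strong_deformation_retract (T : TribeStruct C)
    {X Y : C} (u : X ⟶ Y) (hu : Anodyne T.fib u)
    -- a binary product `Y × Y`
    (prodY : C) (pr₁ pr₂ : prodY ⟶ Y)
    (hprod : IsPullback pr₁ pr₂ (T.isTerm.from Y) (T.isTerm.from Y))
    -- a path object for `Y`
    (PY : C) (ι : Y ⟶ PY) (π : PY ⟶ prodY)
    (hπ : T.fib π)
    (hfact : ι ≫ π = hprod.lift (𝟙 Y) (𝟙 Y) (by simp)) :
    ∃ r : Y ⟶ X, u ≫ r = 𝟙 X ∧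
      ∃ H : Y ⟶ PY,
        H ≫ π = hprod.lift (r ≫ u) (𝟙 Y) (by simp) ∧
        u ≫ H = u ≫ ι := by
  have : HasLiftingProperty u (T.isTerm.from X) := hu _ (T.fib_term X)
  obtain ⟨r, hr⟩ := exists_retraction_of_hasLiftingProperty T.isTerm u
  have : HasLiftingProperty u π := hu π hπ
  exact ⟨r, hr, exists_homotopy_rel_of_hasLiftingProperty T.isTerm u r hr hprod ι π hfact⟩

end TribePaper
end

section
/- Let F be a fibration category. For any two objects x and y, x and y are connected by a zig-zag of weak equivalences if and only if they are connected by a zig-zag of length two x ← z → y in which both legs are weak equivalences. -/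
/-!
Spans of weak equivalences form an equivalence relation containing the weak equivalences, so
they contain all zig-zags. Transitivity needs that every cospan `z ⟶ y ⟵ w` of weak
equivalences is completed by a span: by Brown's factorization lemma `w ⟶ y` factors as a weak
equivalence with a retraction followed by a fibration, which is then trivial by 2-out-of-3, and
the pullback of that trivial fibration along `z ⟶ y` gives the span.
-/

set_option autoImplicit false

open CategoryTheory Limits

universe v u

namespace FibCatPaper

variable {C : Type u} [Category.{v} C]

/-- A fibration category structure: fibrations and weak equivalences, both closed under
composition, a terminal object with all objects fibrant, pullbacks along fibrations with
fibrations and trivial fibrations stable under base change, 2-out-of-3 for weak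
equivalences, and factorizations of diagonals through path objects. -/
structure FibrationCategoryStruct (C : Type u) [Category.{v} C] where
  weq : MorphismProperty C
  fib : MorphismProperty C
  weq_comp : ∀ {x y z : C} (f : x ⟶ y) (g : y ⟶ z), weq f → weq g → weq (f ≫ g)
  fib_comp : ∀ {x y z : C} (f : x ⟶ y) (g : y ⟶ z), fib f → fib g → fib (f ≫ g)
  weq_id : ∀ x : C, weq (𝟙 x)
  term : C
  isTerm : IsTerminal term
  fib_term : ∀ x : C, fib (isTerm.from x)
  pb_exists : ∀ {x y z : C} (f : x ⟶ z) (g : y ⟶ z), fib g →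
    ∃ (w : C) (p₁ : w ⟶ x) (p₂ : w ⟶ y), IsPullback p₁ p₂ f g
  fib_base_change : ∀ {w x y z : C} (p₁ : w ⟶ x) (p₂ : w ⟶ y) (f : x ⟶ z) (g : y ⟶ z),
    IsPullback p₁ p₂ f g → fib g → fib p₁
  trivFib_base_change : ∀ {w x y z : C} (p₁ : w ⟶ x) (p₂ : w ⟶ y) (f : x ⟶ z) (g : y ⟶ z),
    IsPullback p₁ p₂ f g → fib g → weq g → fib p₁ ∧ weq p₁
  two_out_of_three₁ : ∀ {x y z : C} (f : x ⟶ y) (g : y ⟶ z), weq f → weq (f ≫ g) → weq g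
  two_out_of_three₂ : ∀ {x y z : C} (f : x ⟶ y) (g : y ⟶ z), weq g → weq (f ≫ g) → weq f
  path_obj : ∀ x : C,
    ∃ (prodx : C) (pr₁ pr₂ : prodx ⟶ x)
      (hprod : IsPullback pr₁ pr₂ (isTerm.from x) (isTerm.from x))
      (px : C) (w : x ⟶ px) (q : px ⟶ prodx),
      weq w ∧ fib q ∧ w ≫ q = hprod.lift (𝟙 x) (𝟙 x) (by simp)

/-- Two objects are connected by a zig-zag of weak equivalences: the equivalence
closure of the relation "there is a weak equivalence from `x` to `y`". -/
def ZigzagWeq (T : FibrationCategoryStruct C) : C → C → Prop :=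
  Relation.EqvGen (fun x y => ∃ f : x ⟶ y, T.weq f)

namespace FibrationCategoryStruct

variable (T : FibrationCategoryStruct C)

/-- Brown's factorization lemma: `E` is the pullback of the path object `Pb ⟶ b × b` along
`f × 𝟙 b`, and `i` is a weak equivalence because its retraction `r` is a base change of the
trivial fibration `Pb ⟶ b`. -/
theorem exists_weq_fib_factorization {a b : C} (f : a ⟶ b) :
    ∃ (E : C) (i : a ⟶ E) (p : E ⟶ b) (r : E ⟶ a),
      T.weq i ∧ T.fib p ∧ i ≫ p = f ∧ i ≫ r = 𝟙 a := by
  obtain ⟨bb, pr₁, pr₂, hbb, Pb, w, q, hw, hq, hwq⟩ := T.path_obj b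
  obtain ⟨P, ra, rb, hP⟩ := T.pb_exists (T.isTerm.from a) (T.isTerm.from b) (T.fib_term b)
  obtain ⟨k, hk₁, hk₂⟩ : ∃ k : P ⟶ bb, k ≫ pr₁ = ra ≫ f ∧ k ≫ pr₂ = rb :=
    ⟨hbb.lift (ra ≫ f) rb (T.isTerm.hom_ext _ _), hbb.lift_fst _ _ _, hbb.lift_snd _ _ _⟩
  have hk : IsPullback ra k f pr₁ := by
    refine (IsPullback.of_right ?_ hk₁ hbb.flip).flip
    rw [hk₂, T.isTerm.hom_ext (f ≫ _) (T.isTerm.from a)]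
    exact hP.flip
  obtain ⟨E, m, e, hE⟩ := T.pb_exists k q hq
  have hEa : IsPullback (m ≫ ra) e f (q ≫ pr₁) := hE.paste_horiz hk
  have hq₁fib : T.fib (q ≫ pr₁) := T.fib_comp _ _ hq (T.fib_base_change _ _ _ _ hbb (T.fib_term b))
  have hwq₁ : w ≫ q ≫ pr₁ = 𝟙 b := by rw [reassoc_of% hwq, hbb.lift_fst]
  have hwq₂ : w ≫ q ≫ pr₂ = 𝟙 b := by rw [reassoc_of% hwq, hbb.lift_snd]
  have hq₁weq : T.weq (q ≫ pr₁) := T.two_out_of_three₁ w _ hw (hwq₁ ▸ T.weq_id b)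
  have hr : T.weq (m ≫ ra) := (T.trivFib_base_change _ _ _ _ hEa hq₁fib hq₁weq).2
  obtain ⟨i, hi₁, hi₂⟩ : ∃ i : a ⟶ E, i ≫ m ≫ ra = 𝟙 a ∧ i ≫ e = f ≫ w :=
    ⟨hEa.lift (𝟙 a) (f ≫ w) (by simp [hwq₁]), hEa.lift_fst _ _ _, hEa.lift_snd _ _ _⟩
  have hmrb : m ≫ rb = e ≫ q ≫ pr₂ := by rw [← hk₂, reassoc_of% hE.w]
  refine ⟨E, i, m ≫ rb, m ≫ ra, T.two_out_of_three₂ i _ hr (hi₁ ▸ T.weq_id a), ?_, ?_, hi₁⟩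
  · exact T.fib_comp _ _ (T.fib_base_change _ _ _ _ hE hq)
      (T.fib_base_change _ _ _ _ hP.flip (T.fib_term a))
  · rw [hmrb, reassoc_of% hi₂, hwq₂, Category.comp_id]

def SpanWeq (x y : C) : Prop :=
  ∃ (z : C) (f : z ⟶ x) (g : z ⟶ y), T.weq f ∧ T.weq g

variable {T}

theorem spanWeq_of_weq {x y : C} {f : x ⟶ y} (hf : T.weq f) : T.SpanWeq x y :=
  ⟨x, 𝟙 x, f, T.weq_id x, hf⟩

theorem spanWeq_of_cospan {z w y : C} {g : z ⟶ y} {f : w ⟶ y} (hg : T.weq g) (hf : T.weq f) :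
    T.SpanWeq z w := by
  obtain ⟨E, i, p, r, hi, hp, hip, hir⟩ := T.exists_weq_fib_factorization f
  have hp' : T.weq p := T.two_out_of_three₁ i p hi (hip ▸ hf)
  have hr : T.weq r := T.two_out_of_three₁ i r hi (hir ▸ T.weq_id w)
  obtain ⟨V, p₁, p₂, hV⟩ := T.pb_exists g p hp
  have hp₁ : T.weq p₁ := (T.trivFib_base_change _ _ _ _ hV hp hp').2
  have hp₂ : T.weq p₂ := T.two_out_of_three₂ p₂ p hp' (hV.w ▸ T.weq_comp _ _ hp₁ hg)
  exact ⟨V, p₁, p₂ ≫ r, hp₁, T.weq_comp _ _ hp₂ hr⟩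

theorem spanWeq_equivalence : Equivalence T.SpanWeq where
  refl x := spanWeq_of_weq (T.weq_id x)
  symm := fun ⟨z, f, g, hf, hg⟩ => ⟨z, g, f, hg, hf⟩
  trans := fun ⟨_, f, _, hf, hg⟩ ⟨_, _, g', hf', hg'⟩ =>
    let ⟨v, p, p', hp, hp'⟩ := spanWeq_of_cospan hg hf'
    ⟨v, p ≫ f, p' ≫ g', T.weq_comp _ _ hp hf, T.weq_comp _ _ hp' hg'⟩

end FibrationCategoryStruct

/-- In a fibration category, two objects are connected by a zig-zag of
weak equivalences iff they are connected by a single span `x ⟵ z ⟶ y` of weak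
equivalences. -/
theorem zigzag_iff_span (T : FibrationCategoryStruct C) (x y : C) :
    ZigzagWeq T x y ↔
      ∃ (z : C) (f : z ⟶ x) (g : z ⟶ y), T.weq f ∧ T.weq g := by
  constructor
  · intro h
    refine T.spanWeq_equivalence.eqvGen_iff.1 (Relation.EqvGen.mono ?_ _ _ h)
    rintro a b ⟨f, hf⟩
    exact FibrationCategoryStruct.spanWeq_of_weq hf
  · rintro ⟨z, f, g, hf, hg⟩
    exact (Relation.EqvGen.rel _ _ ⟨f, hf⟩).symm.trans _ _ _ (Relation.EqvGen.rel _ _ ⟨g, hg⟩)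

end FibCatPaper
end

section
/- Let T be a tribe and T^(1) the full subcategory of the arrow category of T spanned by the fibrations, equipped with Reedy fibrations (squares whose gap map to the pullback is a fibration) as fibrations. Then T^(1) is a tribe, and its anodyne maps are exactly the pointwise anodyne morphisms of arrows. -/
/-! The Reedy fibrations are controlled by gap maps, and a gap map may be computed against
any chosen pullback. The gap map of `φ ≫ ψ` is the gap map of `φ` followed by a base
change of the gap map of `ψ`. The pullback of a Reedy fibration `g` along `f` is computed
componentwise, and the gap map of its projection to the source of `f` is a base change of
the gap map of `g`. To factor `φ`, first factor its bottom component, then the induced map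
into the pullback. A pointwise anodyne map lifts against a Reedy fibration: lift the bottom
square first, then lift against the gap map. In the other direction, `leftOf` and `rightOf`
are left adjoint to `a ↦ (a → 1)` and `a ↦ (𝟙 a)`, and both of these send fibrations to
Reedy fibrations, so `leftOf` and `rightOf` take anodyne maps to anodyne maps. -/

set_option autoImplicit false

open CategoryTheory Limits

universe v u

namespace TribePaper

variable {C : Type u} [Category.{v} C]

/-- The category `T⁽¹⁾` of fibrations in `C`: the full subcategory of the arrow
category spanned by the fibrations. -/
def FibArrow (T : TribeStruct C) := ObjectProperty.FullSubcategory (fun a : Arrow C => T.fib a.hom)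

instance (T : TribeStruct C) : Category (FibArrow T) :=
  ObjectProperty.FullSubcategory.category _

/-- The left (top) component of a morphism of arrows. -/
def FibArrow.leftOf {T : TribeStruct C} {X Y : FibArrow T} (φ : X ⟶ Y) :
    X.obj.left ⟶ Y.obj.left := CommaMorphism.left φ.hom

/-- The right (bottom) component of a morphism of arrows. -/
def FibArrow.rightOf {T : TribeStruct C} {X Y : FibArrow T} (φ : X ⟶ Y) :
    X.obj.right ⟶ Y.obj.right := CommaMorphism.right φ.hom

/-- Reedy fibrations in `T⁽¹⁾`: the bottom component is a fibration and, for any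
pullback of the bottom cospan, the gap map is a fibration. -/
def ReedyFib (T : TribeStruct C) : MorphismProperty (FibArrow T) :=
  fun X Y φ =>
    T.fib (FibArrow.rightOf φ) ∧
    ∀ (w : C) (k₁ : w ⟶ X.obj.right) (k₂ : w ⟶ Y.obj.left)
      (h : IsPullback k₁ k₂ (FibArrow.rightOf φ) Y.obj.hom),
      T.fib (h.lift X.obj.hom (FibArrow.leftOf φ)
        (by exact (CommaMorphism.w φ.hom).symm))

lemma Anodyne.map_of_adjunction {𝒜 ℬ : Type*} [Category 𝒜] [Category ℬ]
    {fib𝒜 : MorphismProperty 𝒜} {fibℬ : MorphismProperty ℬ} {G : 𝒜 ⥤ ℬ} {F : ℬ ⥤ 𝒜}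
    (adj : G ⊣ F) (hF : ∀ ⦃a b : ℬ⦄ (p : a ⟶ b), fibℬ p → fib𝒜 (F.map p))
    {x y : 𝒜} {i : x ⟶ y} (hi : Anodyne fib𝒜 i) : Anodyne fibℬ (G.map i) :=
  fun p hp => (adj.hasLiftingProperty_iff i p).2 (hi _ (hF p hp))

lemma isPullback_isIso_comp {P' P x y z : C} {fst : P ⟶ x} {snd : P ⟶ y} {f : x ⟶ z}
    {g : y ⟶ z} (h : IsPullback fst snd f g) (e : P' ⟶ P) [IsIso e] :
    IsPullback (e ≫ fst) (e ≫ snd) f g := by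
  simpa using (IsPullback.of_horiz_isIso (snd := e ≫ snd) (g := 𝟙 y) ⟨by simp⟩).paste_horiz h

lemma TribeStruct.fib_to_term (T : TribeStruct C) {x : C} (f : x ⟶ T.term) : T.fib f :=
  T.isTerm.hom_ext (T.isTerm.from x) f ▸ T.fib_term x

namespace FibArrow

variable {T : TribeStruct C}

@[simp] lemma leftOf_comp {X Y Z : FibArrow T} (φ : X ⟶ Y) (ψ : Y ⟶ Z) :
    leftOf (φ ≫ ψ) = leftOf φ ≫ leftOf ψ := rfl

@[simp] lemma rightOf_comp {X Y Z : FibArrow T} (φ : X ⟶ Y) (ψ : Y ⟶ Z) :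
    rightOf (φ ≫ ψ) = rightOf φ ≫ rightOf ψ := rfl

lemma hom_ext {X Y : FibArrow T} {φ ψ : X ⟶ Y}
    (h₁ : leftOf φ = leftOf ψ) (h₂ : rightOf φ = rightOf ψ) : φ = ψ :=
  ObjectProperty.hom_ext _ (CommaMorphism.ext h₁ h₂)

lemma w {X Y : FibArrow T} (φ : X ⟶ Y) : leftOf φ ≫ Y.obj.hom = X.obj.hom ≫ rightOf φ :=
  CommaMorphism.w φ.hom

def homMk {X Y : FibArrow T} (l : X.obj.left ⟶ Y.obj.left) (r : X.obj.right ⟶ Y.obj.right)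
    (w : l ≫ Y.obj.hom = X.obj.hom ≫ r) : X ⟶ Y :=
  ObjectProperty.homMk (⟨l, r, w⟩ : X.obj ⟶ Y.obj)

@[simp] lemma leftOf_homMk {X Y : FibArrow T} (l : X.obj.left ⟶ Y.obj.left)
    (r : X.obj.right ⟶ Y.obj.right) (w : l ≫ Y.obj.hom = X.obj.hom ≫ r) :
    leftOf (homMk l r w) = l := rfl

variable (T) in
def leftFunctor : FibArrow T ⥤ C where
  obj X := X.obj.left
  map := leftOf

variable (T) in
def rightFunctor : FibArrow T ⥤ C where
  obj X := X.obj.right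
  map := rightOf

instance {X Y : FibArrow T} (φ : X ⟶ Y) [IsIso φ] : IsIso (leftOf φ) :=
  (leftFunctor T).map_isIso φ

instance {X Y : FibArrow T} (φ : X ⟶ Y) [IsIso φ] : IsIso (rightOf φ) :=
  (rightFunctor T).map_isIso φ

variable (T) in
def idArrows : C ⥤ FibArrow T where
  obj a := ⟨Arrow.mk (𝟙 a), T.fib_iso (𝟙 a) inferInstance⟩
  map p := homMk p p (by simp)

variable (T) in
def toTerminalArrows : C ⥤ FibArrow T where
  obj a := ⟨Arrow.mk (T.isTerm.from a), T.fib_term a⟩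
  map p := homMk p (𝟙 T.term) (T.isTerm.hom_ext _ _)
  map_comp _ _ := hom_ext rfl (T.isTerm.hom_ext _ _)

variable (T) in
def rightFunctorAdjunction : rightFunctor T ⊣ idArrows T :=
  Adjunction.mkOfHomEquiv
    { homEquiv X _ :=
        { toFun u := homMk (X.obj.hom ≫ u) u (Category.comp_id _)
          invFun φ := rightOf φ
          left_inv _ := rfl
          right_inv φ := hom_ext ((w φ).symm.trans (Category.comp_id _)) rfl }
      homEquiv_naturality_left_symm _ _ := rfl
      homEquiv_naturality_right _ _ := hom_ext (Category.assoc _ _ _).symm rfl }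

variable (T) in
def leftFunctorAdjunction : leftFunctor T ⊣ toTerminalArrows T :=
  Adjunction.mkOfHomEquiv
    { homEquiv _ _ :=
        { toFun u := homMk u (T.isTerm.from _) (T.isTerm.hom_ext _ _)
          invFun φ := leftOf φ
          left_inv _ := rfl
          right_inv _ := hom_ext rfl (T.isTerm.hom_ext _ _) }
      homEquiv_naturality_left_symm _ _ := rfl
      homEquiv_naturality_right _ _ := hom_ext rfl (T.isTerm.hom_ext _ _) }

variable (T) in
noncomputable def isTerminalIdArrowsTerm : IsTerminal ((idArrows T).obj T.term) :=
  have := (rightFunctorAdjunction T).rightAdjoint_preservesLimits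
  T.isTerm.isTerminalObj (idArrows T)

noncomputable def gap {X Y : FibArrow T} (φ : X ⟶ Y) {P : C} {k₁ : P ⟶ X.obj.right}
    {k₂ : P ⟶ Y.obj.left} (h : IsPullback k₁ k₂ (rightOf φ) Y.obj.hom) : X.obj.left ⟶ P :=
  h.lift X.obj.hom (leftOf φ) (w φ).symm

@[simp] lemma gap_fst {X Y : FibArrow T} (φ : X ⟶ Y) {P : C} {k₁ : P ⟶ X.obj.right}
    {k₂ : P ⟶ Y.obj.left} (h : IsPullback k₁ k₂ (rightOf φ) Y.obj.hom) :
    gap φ h ≫ k₁ = X.obj.hom :=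
  h.lift_fst _ _ _

@[simp] lemma gap_snd {X Y : FibArrow T} (φ : X ⟶ Y) {P : C} {k₁ : P ⟶ X.obj.right}
    {k₂ : P ⟶ Y.obj.left} (h : IsPullback k₁ k₂ (rightOf φ) Y.obj.hom) :
    gap φ h ≫ k₂ = leftOf φ :=
  h.lift_snd _ _ _

end FibArrow

open FibArrow

section Reedy

variable {T : TribeStruct C}

lemma ReedyFib.fib_gap {X Y : FibArrow T} {φ : X ⟶ Y} (hφ : ReedyFib T φ) {P : C}
    {k₁ : P ⟶ X.obj.right} {k₂ : P ⟶ Y.obj.left} (h : IsPullback k₁ k₂ (rightOf φ) Y.obj.hom) :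
    T.fib (gap φ h) :=
  hφ.2 _ _ _ h

lemma reedyFib_iff {X Y : FibArrow T} (φ : X ⟶ Y) {P₀ : C} {k₁ : P₀ ⟶ X.obj.right}
    {k₂ : P₀ ⟶ Y.obj.left} (h₀ : IsPullback k₁ k₂ (rightOf φ) Y.obj.hom) :
    ReedyFib T φ ↔ T.fib (rightOf φ) ∧ T.fib (gap φ h₀) := by
  refine ⟨fun hφ => ⟨hφ.1, hφ.fib_gap h₀⟩, fun ⟨hr, hgap⟩ => ⟨hr, fun _ _ _ h => ?_⟩⟩
  have e : gap φ h = gap φ h₀ ≫ (h₀.isoIsPullback _ _ h).hom := h.hom_ext (by simp) (by simp)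
  change T.fib (gap φ h)
  exact e ▸ T.fib_comp _ _ hgap (T.fib_iso _ inferInstance)

lemma reedyFib_of_isIso {X Y : FibArrow T} (φ : X ⟶ Y) [IsIso φ] : ReedyFib T φ := by
  have h₀ : IsPullback (Y.obj.hom ≫ inv (rightOf φ)) (𝟙 _) (rightOf φ) Y.obj.hom :=
    IsPullback.of_vert_isIso ⟨by simp⟩
  have e : gap φ h₀ = leftOf φ := by simpa using gap_snd φ h₀
  exact (reedyFib_iff φ h₀).2 ⟨T.fib_iso _ inferInstance, e ▸ T.fib_iso _ inferInstance⟩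

lemma ReedyFib.comp {X Y Z : FibArrow T} {φ : X ⟶ Y} {ψ : Y ⟶ Z} (hφ : ReedyFib T φ)
    (hψ : ReedyFib T ψ) : ReedyFib T (φ ≫ ψ) := by
  obtain ⟨B, k₁, k₂, hB, hk₁⟩ := T.pb_exists (rightOf ψ) Z.obj.hom Z.property
  obtain ⟨A, m₁, m₂, hA, -⟩ := T.pb_exists (rightOf φ) k₁ hk₁
  obtain ⟨V, r, q₂, hV, hr⟩ := T.pb_exists m₂ (gap ψ hB) (hψ.fib_gap hB)
  have hV' : IsPullback (r ≫ m₁) q₂ (rightOf φ) Y.obj.hom := by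
    simpa only [gap_fst] using hV.paste_horiz hA
  have hA' : IsPullback m₁ (m₂ ≫ k₂) (rightOf (φ ≫ ψ)) Z.obj.hom := hA.paste_vert hB
  have e : gap (φ ≫ ψ) hA' = gap φ hV' ≫ r :=
    hA'.hom_ext (by simp) (by simp [reassoc_of% hV.w, reassoc_of% (gap_snd φ hV')])
  exact (reedyFib_iff _ hA').2
    ⟨T.fib_comp _ _ hφ.1 hψ.1, e ▸ T.fib_comp _ _ (hφ.fib_gap hV') hr⟩

lemma reedyFib_to_idArrows {X : FibArrow T} {a : C} (φ : X ⟶ (idArrows T).obj a)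
    (hφ : T.fib (rightOf φ)) : ReedyFib T φ := by
  have h₀ : IsPullback (𝟙 _) (rightOf φ) (rightOf φ) ((idArrows T).obj a).obj.hom :=
    IsPullback.of_id_fst
  have e : gap φ h₀ = X.obj.hom := by simpa using gap_fst φ h₀
  exact (reedyFib_iff φ h₀).2 ⟨hφ, e ▸ X.property⟩

lemma reedyFib_toTerminalArrows_map {a b : C} {p : a ⟶ b} (hp : T.fib p) :
    ReedyFib T ((toTerminalArrows T).map p) := by
  have h₀ : IsPullback (T.isTerm.from b) (𝟙 b) (𝟙 T.term) (T.isTerm.from b) :=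
    IsPullback.of_vert_isIso ⟨T.isTerm.hom_ext _ _⟩
  have e : gap ((toTerminalArrows T).map p) h₀ = p :=
    (Category.comp_id _).symm.trans (gap_snd _ h₀)
  exact (reedyFib_iff _ h₀).2 ⟨T.fib_iso (𝟙 T.term) inferInstance, by rwa [e]⟩

lemma ReedyFib.fib_leftOf {Y Z : FibArrow T} {g : Y ⟶ Z} (hg : ReedyFib T g) :
    T.fib (leftOf g) := by
  obtain ⟨V, k₁, k₂, hV, -⟩ := T.pb_exists (rightOf g) Z.obj.hom Z.property
  rw [← gap_snd g hV]
  exact T.fib_comp _ _ (hg.fib_gap hV) (T.fib_base_change _ _ _ _ hV.flip hg.1)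

lemma isPullback_of_isPullback_leftOf_rightOf {W X Y Z : FibArrow T} {p₁ : W ⟶ X}
    {p₂ : W ⟶ Y} {f : X ⟶ Z} {g : Y ⟶ Z}
    (hl : IsPullback (leftOf p₁) (leftOf p₂) (leftOf f) (leftOf g))
    (hr : IsPullback (rightOf p₁) (rightOf p₂) (rightOf f) (rightOf g)) :
    IsPullback p₁ p₂ f g := by
  let lift (s : PullbackCone f g) : s.pt ⟶ W :=
    have cl := congrArg leftOf s.condition
    have cr := congrArg rightOf s.condition
    homMk (hl.lift _ _ cl) (hr.lift _ _ cr) <| hr.hom_ext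
      (by simp [← w p₁, reassoc_of% (hl.lift_fst _ _ cl), hr.lift_fst _ _ cr])
      (by simp [← w p₂, reassoc_of% (hl.lift_snd _ _ cl), hr.lift_snd _ _ cr])
  refine IsPullback.of_isLimit (PullbackCone.IsLimit.mk (hom_ext hl.w hr.w) lift
    (fun s => hom_ext (hl.lift_fst _ _ _) (hr.lift_fst _ _ _))
    (fun s => hom_ext (hl.lift_snd _ _ _) (hr.lift_snd _ _ _))
    fun s m h₁ h₂ => hom_ext ?_ ?_)
  · exact hl.hom_ext ((congrArg leftOf h₁).trans (hl.lift_fst _ _ _).symm)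
      ((congrArg leftOf h₂).trans (hl.lift_snd _ _ _).symm)
  · exact hr.hom_ext ((congrArg rightOf h₁).trans (hr.lift_fst _ _ _).symm)
      ((congrArg rightOf h₂).trans (hr.lift_snd _ _ _).symm)

lemma ReedyFib.exists_isPullback {X Y Z : FibArrow T} {g : Y ⟶ Z} (hg : ReedyFib T g)
    (f : X ⟶ Z) :
    ∃ (W : FibArrow T) (p₁ : W ⟶ X) (p₂ : W ⟶ Y), IsPullback p₁ p₂ f g ∧ ReedyFib T p₁ ∧
      IsPullback (leftOf p₁) (leftOf p₂) (leftOf f) (leftOf g) ∧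
      IsPullback (rightOf p₁) (rightOf p₂) (rightOf f) (rightOf g) := by
  obtain ⟨B, k₁, k₂, hB, -⟩ := T.pb_exists (rightOf g) Z.obj.hom Z.property
  obtain ⟨V, b, t, hV, -⟩ :=
    T.pb_exists (leftOf f) k₂ (T.fib_base_change _ _ _ _ hB.flip hg.1)
  -- The left component is built as a base change of the gap map of `g`, so that the base
  -- change map `n` is the gap map of the projection to `X`.
  obtain ⟨Wl, n, l₂, hn, hnfib⟩ := T.pb_exists t (gap g hB) (hg.fib_gap hB)
  obtain ⟨Wr, r₁, r₂, hr, hr₁⟩ := T.pb_exists (rightOf f) (rightOf g) hg.1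
  have hl : IsPullback (n ≫ b) l₂ (leftOf f) (leftOf g) := by
    simpa only [gap_snd] using hn.paste_horiz hV
  have hcomm : (b ≫ X.obj.hom) ≫ rightOf f = (t ≫ k₁) ≫ rightOf g := by
    simp only [Category.assoc, ← w f, reassoc_of% hV.w, hB.w]
  let u := hr.lift (b ≫ X.obj.hom) (t ≫ k₁) hcomm
  have hu : IsPullback u b r₁ X.obj.hom := by
    have hVB := hV.paste_vert hB.flip
    rw [← hr.lift_snd _ _ hcomm, w f] at hVB
    exact (IsPullback.of_bot hVB (hr.lift_fst _ _ hcomm).symm hr).flip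
  let W : FibArrow T :=
    ⟨Arrow.mk (n ≫ u), T.fib_comp _ _ hnfib (T.fib_base_change _ _ _ _ hu X.property)⟩
  let p₁ : W ⟶ X := homMk (n ≫ b) r₁ (by simp [W, u, hr.lift_fst _ _ hcomm])
  let p₂ : W ⟶ Y := homMk l₂ r₂ (by simp [W, u, hr.lift_snd _ _ hcomm, reassoc_of% hn.w])
  have hgap : gap p₁ hu = n := hu.hom_ext (gap_fst p₁ hu) (gap_snd p₁ hu)
  exact ⟨W, p₁, p₂, isPullback_of_isPullback_leftOf_rightOf hl hr,
    (reedyFib_iff p₁ hu).2 ⟨hr₁, hgap ▸ hnfib⟩, hl, hr⟩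

lemma ReedyFib.baseChange {P X Y Z : FibArrow T} {p₁ : P ⟶ X} {p₂ : P ⟶ Y} {f : X ⟶ Z}
    {g : Y ⟶ Z} (hg : ReedyFib T g) (h : IsPullback p₁ p₂ f g) : ReedyFib T p₁ := by
  obtain ⟨W, q₁, q₂, h', hq₁, -⟩ := hg.exists_isPullback f
  rw [← h.isoIsPullback_hom_fst _ _ h']
  exact (reedyFib_of_isIso _).comp hq₁

lemma ReedyFib.isPullback_leftOf_rightOf {P X Y Z : FibArrow T} {p₁ : P ⟶ X} {p₂ : P ⟶ Y}
    {f : X ⟶ Z} {g : Y ⟶ Z} (hg : ReedyFib T g) (h : IsPullback p₁ p₂ f g) :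
    IsPullback (leftOf p₁) (leftOf p₂) (leftOf f) (leftOf g) ∧
      IsPullback (rightOf p₁) (rightOf p₂) (rightOf f) (rightOf g) := by
  obtain ⟨W, q₁, q₂, h', -, hl, hr⟩ := hg.exists_isPullback f
  let e := h.isoIsPullback _ _ h'
  have hl' := isPullback_isIso_comp hl (leftOf e.hom)
  have hr' := isPullback_isIso_comp hr (rightOf e.hom)
  rw [← leftOf_comp, ← leftOf_comp, h.isoIsPullback_hom_fst, h.isoIsPullback_hom_snd] at hl'
  rw [← rightOf_comp, ← rightOf_comp, h.isoIsPullback_hom_fst, h.isoIsPullback_hom_snd] at hr'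
  exact ⟨hl', hr'⟩

lemma anodyne_of_pointwise {X Y : FibArrow T} {φ : X ⟶ Y} (hl : Anodyne T.fib (leftOf φ))
    (hr : Anodyne T.fib (rightOf φ)) : Anodyne (ReedyFib T) φ := by
  intro P Q ψ hψ
  refine ⟨fun {top bot} sq => ?_⟩
  have sqr : CommSq (rightOf top) (rightOf φ) (rightOf ψ) (rightOf bot) :=
    ⟨congrArg rightOf sq.w⟩
  obtain ⟨⟨⟨r, hr₁, hr₂⟩⟩⟩ := (hr _ hψ.1).sq_hasLift sqr
  obtain ⟨V, k₁, k₂, hV, -⟩ := T.pb_exists (rightOf ψ) Q.obj.hom Q.property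
  have hbot : (Y.obj.hom ≫ r) ≫ rightOf ψ = leftOf bot ≫ Q.obj.hom := by
    rw [Category.assoc, hr₂, w bot]
  have sql : CommSq (leftOf top) (leftOf φ) (gap ψ hV) (hV.lift _ _ hbot) :=
    ⟨hV.hom_ext (by simp [hV.lift_fst _ _ hbot, w top, ← hr₁, reassoc_of% (w φ)])
      (by simp [hV.lift_snd _ _ hbot, ← leftOf_comp, sq.w])⟩
  obtain ⟨⟨⟨l, hl₁, hl₂⟩⟩⟩ := (hl _ (hψ.fib_gap hV)).sq_hasLift sql
  have hl₂₁ : l ≫ P.obj.hom = Y.obj.hom ≫ r := by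
    simpa [hV.lift_fst _ _ hbot] using hl₂ =≫ k₁
  have hl₂₂ : l ≫ leftOf ψ = leftOf bot := by
    simpa [hV.lift_snd _ _ hbot] using hl₂ =≫ k₂
  exact ⟨⟨⟨homMk l r hl₂₁, hom_ext hl₁ hr₁, hom_ext hl₂₂ hr₂⟩⟩⟩

lemma Anodyne.leftOf {X Y : FibArrow T} {φ : X ⟶ Y} (h : Anodyne (ReedyFib T) φ) :
    Anodyne T.fib (leftOf φ) :=
  h.map_of_adjunction (leftFunctorAdjunction T) fun _ _ _ hp => reedyFib_toTerminalArrows_map hp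

lemma Anodyne.rightOf {X Y : FibArrow T} {φ : X ⟶ Y} (h : Anodyne (ReedyFib T) φ) :
    Anodyne T.fib (rightOf φ) :=
  h.map_of_adjunction (rightFunctorAdjunction T) fun _ _ _ hp => reedyFib_to_idArrows _ hp

lemma anodyne_reedyFib_iff {X Y : FibArrow T} (φ : X ⟶ Y) :
    Anodyne (ReedyFib T) φ ↔ Anodyne T.fib (leftOf φ) ∧ Anodyne T.fib (rightOf φ) :=
  ⟨fun h => ⟨h.leftOf, h.rightOf⟩, fun h => anodyne_of_pointwise h.1 h.2⟩

lemma exists_anodyne_reedyFib_factorization {X Y : FibArrow T} (φ : X ⟶ Y) :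
    ∃ (M : FibArrow T) (ι : X ⟶ M) (π : M ⟶ Y),
      Anodyne (ReedyFib T) ι ∧ ReedyFib T π ∧ ι ≫ π = φ := by
  obtain ⟨c, i₂, p₂, hi₂, hp₂, hfac₂⟩ := T.fact (rightOf φ)
  obtain ⟨P, m₁, m₂, hP, hm₁⟩ := T.pb_exists p₂ Y.obj.hom Y.property
  have hcomm : (X.obj.hom ≫ i₂) ≫ p₂ = leftOf φ ≫ Y.obj.hom := by
    rw [Category.assoc, hfac₂, w φ]
  obtain ⟨L, i₁, q, hi₁, hq, hfac₁⟩ := T.fact (hP.lift _ _ hcomm)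
  let M : FibArrow T := ⟨Arrow.mk (q ≫ m₁), T.fib_comp _ _ hq hm₁⟩
  let ι : X ⟶ M := homMk i₁ i₂ (by simpa [M, hP.lift_fst _ _ hcomm] using hfac₁ =≫ m₁)
  let π : M ⟶ Y := homMk (q ≫ m₂) p₂ (by simp [M, hP.w])
  have hgap : gap π hP = q := hP.hom_ext (gap_fst π hP) (gap_snd π hP)
  refine ⟨M, ι, π, anodyne_of_pointwise hi₁ hi₂, (reedyFib_iff π hP).2 ⟨hp₂, hgap ▸ hq⟩,
    hom_ext ?_ hfac₂⟩
  simpa [ι, π, hP.lift_snd _ _ hcomm] using hfac₁ =≫ m₂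

lemma anodyne_reedyFib_baseChange {P X Y Z : FibArrow T} {p₁ : P ⟶ X} {p₂ : P ⟶ Y}
    {f : X ⟶ Z} {g : Y ⟶ Z} (h : IsPullback p₁ p₂ f g) (hg : ReedyFib T g)
    (hf : Anodyne (ReedyFib T) f) : Anodyne (ReedyFib T) p₂ := by
  obtain ⟨hl, hr⟩ := hg.isPullback_leftOf_rightOf h
  exact anodyne_of_pointwise (T.anodyne_base_change _ _ _ _ hl hg.fib_leftOf hf.leftOf)
    (T.anodyne_base_change _ _ _ _ hr hg.1 hf.rightOf)

variable (T) in
noncomputable def reedyTribe : TribeStruct (FibArrow T) where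
  fib := ReedyFib T
  fib_comp _ _ := ReedyFib.comp
  fib_iso f _ := reedyFib_of_isIso f
  term := (idArrows T).obj T.term
  isTerm := isTerminalIdArrowsTerm T
  fib_term _ := reedyFib_to_idArrows _ (T.fib_to_term _)
  pb_exists f _ hg :=
    have ⟨W, p₁, p₂, h, hp₁, _⟩ := hg.exists_isPullback f
    ⟨W, p₁, p₂, h, hp₁⟩
  fib_base_change _ _ _ _ h hg := hg.baseChange h
  fact := exists_anodyne_reedyFib_factorization
  anodyne_base_change _ _ _ _ h hg hf := anodyne_reedyFib_baseChange h hg hf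

end Reedy

/-- `T⁽¹⁾`, the full subcategory of the arrow category spanned by the
fibrations, equipped with the Reedy fibrations, is a tribe whose anodyne maps are
exactly the pointwise anodyne morphisms of arrows. -/
theorem fibArrow_tribe_and_anodyne_pointwise (T : TribeStruct C) :
    ∃ S : TribeStruct (FibArrow T),
      S.fib = ReedyFib T ∧
      ∀ {X Y : FibArrow T} (φ : X ⟶ Y),
        Anodyne S.fib φ ↔
          (Anodyne T.fib (FibArrow.leftOf φ) ∧ Anodyne T.fib (FibArrow.rightOf φ)) :=
  ⟨reedyTribe T, rfl, anodyne_reedyFib_iff⟩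

end TribePaper
end

section
/- A free category on a graph, regarded as a simplicially enriched category with discrete hom-spaces, is cofibrant in the Bergner model structure on simplicial categories; more precisely, it can be built as a (transfinite) cell complex from the two generating cofibrations ∅ → [0] and [0] ⊔ [0] → [1], where [0] is the terminal simplicial category and [1] the discrete arrow category. -/
set_option autoImplicit false

open CategoryTheory

namespace Stmt18

/-- The generating cofibration `∅ ⟶ [0]` of the Bergner model structure
(restricted to categories with discrete hom-spaces, i.e. to `Cat`). -/
def gen₀ : Cat.of (Discrete PEmpty) ⟶ Cat.of (Discrete PUnit) :=
  (Functor.empty _).toCatHom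

/-- The generating cofibration `[0] ⊔ [0] ⟶ [1]`: the inclusion of the two endpoints
into the arrow category. -/
def gen₁ : Cat.of (Discrete Bool) ⟶ Cat.of (Fin 2) :=
  (Discrete.functor (fun b => (cond b 1 0 : Fin 2))).toCatHom

/-! Lifting against `∅ ⟶ [0]` makes `p` surjective on objects and lifting against
`[0] ⊔ [0] ⟶ [1]` makes it full. A functor out of a free category is freely determined by its
values on vertices and edges, so every functor `Paths V ⥤ Y` lifts through such a `p`, one vertex
and one edge at a time; as the top edge of the lifting square starts at the empty category, any
such lift solves the lifting problem. -/

universe u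

theorem Paths.exists_lift_comp_eq_of_full {V : Type*} [Quiver V] {C D : Type*} [Category C]
    [Category D] (F : C ⥤ D) [F.Full] (hF : Function.Surjective F.obj) (G : Paths V ⥤ D) :
    ∃ L : Paths V ⥤ C, L ⋙ F = G := by
  let o : V → C := fun v => Function.surjInv hF (G.obj v)
  have ho : ∀ v, F.obj (o v) = G.obj v := fun v => Function.surjInv_eq hF _
  refine ⟨Paths.lift
    { obj := o
      map := fun e => F.preimage (eqToHom (ho _) ≫ G.map e.toPath ≫ eqToHom (ho _).symm) }, ?_⟩
  fapply Paths.ext_functor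
  · funext v
    exact ho v
  · intro a b e
    change F.map ((Paths.lift _).map e.toPath) = _
    rw [Paths.lift_toPath]
    exact F.map_preimage _

theorem surjective_obj_of_hasLiftingProperty_gen₀ {X Y : Cat.{0, 0}} (p : X ⟶ Y)
    (h : HasLiftingProperty gen₀ p) : Function.Surjective p.toFunctor.obj := by
  intro y
  have sq : CommSq (Functor.empty X).toCatHom gen₀ p ((Functor.const _).obj y).toCatHom :=
    ⟨Cat.ext (Functor.empty_ext' _ _)⟩
  obtain ⟨⟨l⟩⟩ := h.sq_hasLift sq
  exact ⟨l.l.toFunctor.obj ⟨⟨⟩⟩, Functor.congr_obj (congrArg Cat.Hom.toFunctor l.fac_right) _⟩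

theorem full_of_hasLiftingProperty_gen₁ {X Y : Cat.{0, 0}} (p : X ⟶ Y)
    (h : HasLiftingProperty gen₁ p) : p.toFunctor.Full := by
  refine ⟨fun {x₀ x₁} g => ?_⟩
  let ends : Cat.of (Discrete Bool) ⟶ X := (Discrete.functor (fun b => cond b x₁ x₀)).toCatHom
  have sq : CommSq ends gen₁ p (ComposableArrows.mk₁ g).toCatHom := by
    refine ⟨Cat.ext (Discrete.functor_ext ?_)⟩
    rintro (_ | _) <;> rfl
  obtain ⟨⟨l⟩⟩ := h.sq_hasLift sq
  have e₀ : l.l.toFunctor.obj (0 : Fin 2) = x₀ :=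
    Functor.congr_obj (congrArg Cat.Hom.toFunctor l.fac_left) ⟨false⟩
  have e₁ : l.l.toFunctor.obj (1 : Fin 2) = x₁ :=
    Functor.congr_obj (congrArg Cat.Hom.toFunctor l.fac_left) ⟨true⟩
  let φ : (0 : Fin 2) ⟶ 1 := homOfLE (by decide)
  refine ⟨eqToHom e₀.symm ≫ l.l.toFunctor.map φ ≫ eqToHom e₁, ?_⟩
  have hφ : p.toFunctor.map (l.l.toFunctor.map φ) =
      eqToHom (congrArg p.toFunctor.obj e₀) ≫ g ≫ eqToHom (congrArg p.toFunctor.obj e₁).symm :=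
    Functor.congr_hom (congrArg Cat.Hom.toFunctor l.fac_right) φ
  rw [Functor.map_comp, Functor.map_comp, eqToHom_map, eqToHom_map, hφ]
  simp

theorem hasLiftingProperty_empty_of_forall_exists_lift {C X Y : Cat.{u, u}} (p : X ⟶ Y)
    (h : ∀ G : C.α ⥤ Y.α, ∃ L : C.α ⥤ X.α, L ⋙ p.toFunctor = G) :
    HasLiftingProperty (Functor.empty C).toCatHom p := by
  refine ⟨fun {_ g} _ => ?_⟩
  obtain ⟨L, hL⟩ := h g.toFunctor
  exact ⟨⟨⟨L.toCatHom, Cat.ext (Functor.empty_ext' _ _), Cat.ext hL⟩⟩⟩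

/-- The free category on a graph (quiver), regarded as a simplicial
category with discrete hom-spaces, is cofibrant in the Bergner model structure: the map
from the initial (empty) category to it lies in the left saturation of the two
generating cofibrations `∅ ⟶ [0]` and `[0] ⊔ [0] ⟶ [1]`, i.e. it has the left lifting
property against every functor having the right lifting property against both. -/
theorem free_category_cofibrant (V : Type) [Quiver.{0} V] :
    ∀ {X Y : Cat.{0, 0}} (p : X ⟶ Y),
      HasLiftingProperty gen₀ p → HasLiftingProperty gen₁ p →
      HasLiftingProperty
        (show Cat.of (Discrete PEmpty) ⟶ Cat.of (Paths V) from (Functor.empty (Paths V)).toCatHom) p := by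
  intro X Y p h₀ h₁
  have : p.toFunctor.Full := full_of_hasLiftingProperty_gen₁ p h₁
  exact hasLiftingProperty_empty_of_forall_exists_lift (C := Cat.of (Paths V)) p
    (Paths.exists_lift_comp_eq_of_full (V := V) p.toFunctor
      (surjective_obj_of_hasLiftingProperty_gen₀ p h₀))

end Stmt18
end
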